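/- Let G be a simple graph with edge ideal I = I(G). Then √(I^(3) : x_1² x_2) = (I : x_1) ∩ (I : x_2). -/

import Mathlib

open MvPolynomial

/-- `I` is a squarefree monomial ideal: generated by squarefree monomials `x_F`. -/
def IsSqFreeMonomialIdeal {k : Type*} [Field k] {n : ℕ}
    (I : Ideal (MvPolynomial (Fin n) k)) : Prop :=
  ∃ A : Set (Finset (Fin n)), I = Ideal.span ((fun F => ∏ i ∈ F, X i) '' A)

/-- `I` is a monomial ideal. -/
def IsMonomialIdeal {k : Type*} [Field k] {n : ℕ}
    (I : Ideal (MvPolynomial (Fin n) k)) : Prop :=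
  ∃ A : Set (Fin n →₀ ℕ), I = Ideal.span ((fun a => monomial a (1 : k)) '' A)

/-- The Stanley-Reisner complex of a (squarefree monomial) ideal. -/
def SRComplex {k : Type*} [Field k] {n : ℕ}
    (I : Ideal (MvPolynomial (Fin n) k)) : Set (Finset (Fin n)) :=
  {F | ∏ i ∈ F, X i ∉ I}

/-- A collection of finsets is an (abstract) simplicial complex if it is
downward closed. -/
def IsComplex {n : ℕ} (Δ : Set (Finset (Fin n))) : Prop :=
  ∀ F ∈ Δ, ∀ G, G ⊆ F → G ∈ Δ

def IsFacet {n : ℕ} (Δ : Set (Finset (Fin n))) (F : Finset (Fin n)) : Prop :=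
  F ∈ Δ ∧ ∀ G ∈ Δ, F ⊆ G → F = G

/-- `Δ` is a cone over `t`: every facet contains `t`. -/
def IsConeOver {n : ℕ} (Δ : Set (Finset (Fin n))) (t : Fin n) : Prop :=
  ∀ F, IsFacet Δ F → t ∈ F

/-- Exponent `a` is a minimal monomial generator of the monomial ideal `I`. -/
def IsMinGen {k : Type*} [Field k] {n : ℕ}
    (I : Ideal (MvPolynomial (Fin n) k)) (a : Fin n →₀ ℕ) : Prop :=
  monomial a (1 : k) ∈ I ∧
    ∀ i : Fin n, a i ≠ 0 → monomial (a - Finsupp.single i 1) (1 : k) ∉ I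

/-- Boundary of a single oriented simplex (vertices ordered by `<`). -/
noncomputable def bdryVec (k : Type*) [Field k] {n : ℕ} (F : Finset (Fin n)) :
    Finset (Fin n) →₀ k :=
  ∑ i ∈ F, ((-1 : k) ^ ((F.filter (· < i)).card)) • Finsupp.single (F.erase i) (1 : k)

/-- Simplicial boundary map on formal `k`-linear combinations of finsets. -/
noncomputable def bdry (k : Type*) [Field k] {n : ℕ} :
    (Finset (Fin n) →₀ k) →ₗ[k] (Finset (Fin n) →₀ k) :=
  Finsupp.lsum k fun F => LinearMap.toSpanSingleton k _ (bdryVec k F)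

/-- The reduced simplicial homology `H̃_q(Δ; k)` is nonzero: there is a cycle
supported on faces of `Δ` of cardinality `q+1` which is not the boundary of a
chain supported on faces of `Δ` of cardinality `q+2`. -/
def ReducedHomologyNonzero (k : Type*) [Field k] {n : ℕ}
    (Δ : Set (Finset (Fin n))) (q : ℤ) : Prop :=
  ∃ c : Finset (Fin n) →₀ k,
    (∀ F ∈ c.support, F ∈ Δ ∧ (F.card : ℤ) = q + 1) ∧
    bdry k c = 0 ∧
    ∀ b : Finset (Fin n) →₀ k,
      (∀ F ∈ b.support, F ∈ Δ ∧ (F.card : ℤ) = q + 2) → bdry k b ≠ c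

/-- The link of a face `F` in `Δ`. -/
def linkOf {n : ℕ} (Δ : Set (Finset (Fin n))) (F : Finset (Fin n)) :
    Set (Finset (Fin n)) :=
  {G | Disjoint F G ∧ F ∪ G ∈ Δ}

/-- The degree complex `Δ_a(I) = Δ(√(I : x^a))`. -/
noncomputable def degreeComplex {k : Type*} [Field k] {n : ℕ}
    (I : Ideal (MvPolynomial (Fin n) k)) (a : Fin n →₀ ℕ) : Set (Finset (Fin n)) :=
  SRComplex ((Submodule.colon I (Ideal.span {monomial a (1 : k)})).radical)

/-- The Castelnuovo-Mumford regularity of `S/I` for a monomial ideal `I`,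
via the Hochster-type formula of Minh-Nam-Phong-Thuy-Vu (Lemma 2.12/2.19 of
[MNPTV]): `reg S/I = max{|a| + i : H̃_{i-1}(lk_{Δ_a(I)} F; k) ≠ 0` for some
`F ∈ Δ_a(I)` with `F ∩ supp a = ∅}`. -/
noncomputable def regQuot {k : Type*} [Field k] {n : ℕ}
    (I : Ideal (MvPolynomial (Fin n) k)) : ℕ :=
  sSup {d : ℕ | ∃ (a : Fin n →₀ ℕ) (i : ℕ) (F : Finset (Fin n)),
    F ∈ degreeComplex I a ∧ (∀ j ∈ F, a j = 0) ∧
    ReducedHomologyNonzero k (linkOf (degreeComplex I a) F) ((i : ℤ) - 1) ∧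
    d = (a.sum fun _ t => t) + i}

/-- The Castelnuovo-Mumford regularity of a (monomial) ideal `I`:
`reg I = reg S/I + 1`. -/
noncomputable def reg {k : Type*} [Field k] {n : ℕ}
    (I : Ideal (MvPolynomial (Fin n) k)) : ℕ :=
  regQuot I + 1

/-- The `s`-th symbolic power: intersection of the `s`-th powers of the
minimal primes. -/
noncomputable def symbPow {R : Type*} [CommRing R] (I : Ideal R) (s : ℕ) : Ideal R :=
  ⨅ p ∈ I.minimalPrimes, p ^ s

/-- Squarefree part of an exponent. -/
noncomputable def sqfreePart {n : ℕ} (a : Fin n →₀ ℕ) : Fin n →₀ ℕ :=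
  Finsupp.mapRange (fun t => min t 1) (by simp) a

open scoped Classical in
/-- The `*`-partial derivative (derivative without coefficients) of a
polynomial with respect to `x^a`. -/
noncomputable def starDeriv {k : Type*} [Field k] {n : ℕ} (a : Fin n →₀ ℕ)
    (f : MvPolynomial (Fin n) k) : MvPolynomial (Fin n) k :=
  (AddMonoidAlgebra.coeff f).sum fun b c => if a ≤ b then monomial (b - a) c else 0

/-- The edge ideal of a simple graph. -/
noncomputable def edgeIdeal (k : Type*) [Field k] {n : ℕ}
    (G : SimpleGraph (Fin n)) : Ideal (MvPolynomial (Fin n) k) :=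
  Ideal.span {f | ∃ i j, G.Adj i j ∧ f = X i * X j}

/-- A graph is gap-free: no induced pair of disjoint edges. -/
def IsGapFree {n : ℕ} (G : SimpleGraph (Fin n)) : Prop :=
  ∀ a b c d : Fin n, G.Adj a b → G.Adj c d →
    a ≠ c → a ≠ d → b ≠ c → b ≠ d →
    (G.Adj a c ∨ G.Adj a d ∨ G.Adj b c ∨ G.Adj b d)

/-- The closed neighborhood of a set of vertices. -/
def closedNbhd {n : ℕ} (G : SimpleGraph (Fin n)) (U : Set (Fin n)) : Set (Fin n) :=
  U ∪ {v | ∃ u ∈ U, G.Adj u v}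

/-- `J` is an intermediate ideal in `Inter(K, L)`: `J = K + (f_1, ..., f_t)`
where the `f_j` are minimal monomial generators of `L`. -/
def IsIntermediate {k : Type*} [Field k] {n : ℕ}
    (J K L : Ideal (MvPolynomial (Fin n) k)) : Prop :=
  ∃ T : Set (Fin n →₀ ℕ), (∀ a ∈ T, IsMinGen L a) ∧
    J = K ⊔ Ideal.span ((fun a => monomial a (1 : k)) '' T)


section Aux12

variable {k : Type*} [Field k] {n : ℕ}

open scoped Classical in
/-- The algebra map killing the variables in `C`. -/
noncomputable def piC (C : Set (Fin n)) :
    MvPolynomial (Fin n) k →ₐ[k] MvPolynomial (Fin n) k :=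
  aeval fun v => if v ∈ C then 0 else X v

open scoped Classical in
/-- The algebra map sending `X v ↦ t · X v` for `v ∈ C`. -/
noncomputable def psiC (C : Set (Fin n)) :
    MvPolynomial (Fin n) k →ₐ[k] Polynomial (MvPolynomial (Fin n) k) :=
  aeval fun v => if v ∈ C then Polynomial.X * Polynomial.C (X v) else Polynomial.C (X v)

lemma sub_piC_mem (C : Set (Fin n)) (f : MvPolynomial (Fin n) k) :
    f - piC C f ∈ Ideal.span (X '' C : Set (MvPolynomial (Fin n) k)) := by
  induction f using MvPolynomial.induction_on with
  | C a =>
      have h1 : piC (k := k) C (MvPolynomial.C a) = MvPolynomial.C a := by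
        simp [piC, algebraMap_eq]
      rw [h1, sub_self]; exact zero_mem _
  | add p q hp hq =>
      have h1 : p + q - piC C (p + q) = (p - piC C p) + (q - piC C q) := by
        rw [map_add]; ring
      rw [h1]; exact add_mem hp hq
  | mul_X p v hp =>
      by_cases hv : v ∈ C
      · have h1 : piC (k := k) C (p * X v) = 0 := by
          rw [map_mul]; simp [piC, hv]
        rw [h1, sub_zero]
        exact Ideal.mul_mem_left _ p (Ideal.subset_span ⟨v, hv, rfl⟩)
      · have h1 : piC (k := k) C (p * X v) = piC C p * X v := by
          rw [map_mul]; simp [piC, hv]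
        have h2 : p * X v - piC C p * X v = (p - piC C p) * X v := by ring
        rw [h1, h2]
        exact Ideal.mul_mem_right _ _ hp

lemma piC_eq_zero_iff (C : Set (Fin n)) (f : MvPolynomial (Fin n) k) :
    piC C f = 0 ↔ f ∈ Ideal.span (X '' C : Set (MvPolynomial (Fin n) k)) := by
  constructor
  · intro h
    have h1 := sub_piC_mem C f
    rwa [h, sub_zero] at h1
  · intro h
    have h1 : Ideal.span (X '' C : Set (MvPolynomial (Fin n) k))
        ≤ RingHom.ker (piC (k := k) C).toRingHom := by
      rw [Ideal.span_le]
      rintro _ ⟨v, hv, rfl⟩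
      have : piC (k := k) C (X v) = 0 := by simp [piC, hv]
      simpa [RingHom.mem_ker] using this
    simpa [RingHom.mem_ker] using h1 h

lemma isPrime_span_X_image (C : Set (Fin n)) :
    (Ideal.span (X '' C : Set (MvPolynomial (Fin n) k))).IsPrime := by
  constructor
  · intro htop
    have h1 : (1 : MvPolynomial (Fin n) k) ∈ Ideal.span (X '' C) := htop ▸ Submodule.mem_top
    have h2 := (piC_eq_zero_iff C 1).mpr h1
    rw [map_one] at h2
    exact one_ne_zero h2
  · intro x y hxy
    have h := (piC_eq_zero_iff (k := k) C (x * y)).mpr hxy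
    rw [map_mul] at h
    rcases mul_eq_zero.mp h with h | h
    · exact Or.inl ((piC_eq_zero_iff C x).mp h)
    · exact Or.inr ((piC_eq_zero_iff C y).mp h)

lemma coeff_zero_psiC (C : Set (Fin n)) (f : MvPolynomial (Fin n) k) :
    (psiC C f).coeff 0 = piC C f := by
  induction f using MvPolynomial.induction_on with
  | C a => simp [psiC, piC, algebraMap_eq, Polynomial.algebraMap_apply]
  | add p q hp hq => simp [map_add, hp, hq]
  | mul_X p v hp =>
      rw [map_mul, map_mul, Polynomial.mul_coeff_zero, hp]
      congr 1
      by_cases hv : v ∈ C <;> simp [psiC, piC, hv]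

lemma X_dvd_of_cube_dvd {S : Type*} [CommRing S] [IsDomain S] {e : ℕ} (he : e ≤ 2)
    {h : Polynomial S} (hd : Polynomial.X ^ 3 ∣ Polynomial.X ^ e * h) : Polynomial.X ∣ h := by
  obtain ⟨u, hu⟩ := hd
  have h3 : (3 : ℕ) = e + (3 - e) := by omega
  rw [h3, pow_add, mul_assoc] at hu
  have h4 := mul_left_cancel₀ (pow_ne_zero e (Polynomial.X_ne_zero (R := S))) hu
  rw [h4]
  exact Dvd.dvd.mul_right (dvd_pow_self _ (by omega)) u

lemma key_colon (C : Set (Fin n)) {v₁ v₂ : Fin n} (hC : v₁ ∉ C ∨ v₂ ∉ C)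
    (f : MvPolynomial (Fin n) k)
    (hf : f * (X v₁ ^ 2 * X v₂) ∈ (Ideal.span (X '' C : Set (MvPolynomial (Fin n) k))) ^ 3) :
    f ∈ Ideal.span (X '' C : Set (MvPolynomial (Fin n) k)) := by
  set ψ := psiC (k := k) C with hψ
  have hmap : Ideal.map ψ (Ideal.span (X '' C : Set (MvPolynomial (Fin n) k)))
      ≤ Ideal.span {(Polynomial.X : Polynomial (MvPolynomial (Fin n) k))} := by
    rw [Ideal.map_span, Ideal.span_le]
    rintro _ ⟨_, ⟨v, hv, rfl⟩, rfl⟩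
    have h1 : ψ (X v) = Polynomial.X * Polynomial.C (X v) := by simp [hψ, psiC, hv]
    rw [h1]
    exact Ideal.mem_span_singleton.mpr (dvd_mul_right _ _)
  have h1 : ψ (f * (X v₁ ^ 2 * X v₂)) ∈
      Ideal.span {(Polynomial.X : Polynomial (MvPolynomial (Fin n) k))} ^ 3 := by
    have h2 := Ideal.mem_map_of_mem ψ hf
    rw [Ideal.map_pow] at h2
    exact Ideal.pow_right_mono hmap 3 h2
  rw [Ideal.span_singleton_pow, Ideal.mem_span_singleton] at h1
  have hform : ∃ e : ℕ, e ≤ 2 ∧ ψ (f * (X v₁ ^ 2 * X v₂)) =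
      Polynomial.X ^ e * (ψ f * Polynomial.C (X v₁ ^ 2 * X v₂)) := by
    by_cases h1' : v₁ ∈ C
    · have h2' : v₂ ∉ C := hC.resolve_left (fun h => h h1')
      exact ⟨2, le_refl 2, by simp [hψ, psiC, h1', h2', map_mul, map_pow] <;> ring⟩
    · by_cases h2' : v₂ ∈ C
      · exact ⟨1, by omega, by simp [hψ, psiC, h1', h2', map_mul, map_pow] <;> ring⟩
      · exact ⟨0, by omega, by simp [hψ, psiC, h1', h2', map_mul, map_pow] <;> ring⟩
  obtain ⟨e, he, heq⟩ := hform
  rw [heq] at h1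
  have h3 : Polynomial.X ∣ ψ f * Polynomial.C (X v₁ ^ 2 * X v₂) := X_dvd_of_cube_dvd he h1
  have hne : (X v₁ ^ 2 * X v₂ : MvPolynomial (Fin n) k) ≠ 0 :=
    mul_ne_zero (pow_ne_zero _ (X_ne_zero _)) (X_ne_zero _)
  rcases (Polynomial.prime_X).2.2 _ _ h3 with h4 | h4
  · rw [Polynomial.X_dvd_iff, coeff_zero_psiC] at h4
    exact (piC_eq_zero_iff C f).mp h4
  · exfalso
    rw [Polynomial.X_dvd_iff, Polynomial.coeff_C_zero] at h4
    exact hne h4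

lemma edgeIdeal_eq_span_monomial (G : SimpleGraph (Fin n)) :
    edgeIdeal k G = Ideal.span ((fun a => monomial a (1 : k)) ''
      {a | ∃ i j, G.Adj i j ∧ a = Finsupp.single i 1 + Finsupp.single j 1}) := by
  unfold edgeIdeal
  congr 1
  ext f
  constructor
  · rintro ⟨i, j, hij, rfl⟩
    refine ⟨Finsupp.single i 1 + Finsupp.single j 1, ⟨i, j, hij, rfl⟩, ?_⟩
    rw [X, X, monomial_mul, one_mul]
  · rintro ⟨_, ⟨i, j, hij, rfl⟩, rfl⟩
    exact ⟨i, j, hij, by rw [X, X, monomial_mul, one_mul]⟩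

lemma minimalPrime_eq_span (G : SimpleGraph (Fin n)) {p : Ideal (MvPolynomial (Fin n) k)}
    (hp : p ∈ (edgeIdeal k G).minimalPrimes) :
    p = Ideal.span (X '' {v | X v ∈ p}) := by
  have hq : Ideal.span (X '' {v | X v ∈ p}) ≤ p := by
    rw [Ideal.span_le]
    rintro _ ⟨v, hv, rfl⟩
    exact hv
  have hprime := hp.1.1
  have hIp := hp.1.2
  have hIq : edgeIdeal k G ≤ Ideal.span (X '' {v | X v ∈ p}) := by
    rw [edgeIdeal, Ideal.span_le]
    rintro _ ⟨i, j, hij, rfl⟩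
    have hmem : (X i : MvPolynomial (Fin n) k) * X j ∈ p := by
      apply hIp
      exact Ideal.subset_span ⟨i, j, hij, rfl⟩
    rcases hprime.mem_or_mem hmem with h | h
    · exact Ideal.mul_mem_right _ _ (Ideal.subset_span ⟨i, h, rfl⟩)
    · exact Ideal.mul_mem_left _ _ (Ideal.subset_span ⟨j, h, rfl⟩)
  exact le_antisymm (hp.2 ⟨isPrime_span_X_image _, hIq⟩ hq) hq

lemma radical_le_edgeIdeal (G : SimpleGraph (Fin n)) :
    (edgeIdeal k G).radical ≤ edgeIdeal k G := by
  intro h hh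
  obtain ⟨t, ht⟩ := Ideal.mem_radical_iff.mp hh
  rw [edgeIdeal_eq_span_monomial, mem_ideal_span_monomial_image]
  intro b hb
  by_contra hcon
  push_neg at hcon
  set Cb : Set (Fin n) := {v | b v = 0} with hCdef
  have hIC : edgeIdeal k G ≤ Ideal.span (X '' Cb : Set (MvPolynomial (Fin n) k)) := by
    rw [edgeIdeal, Ideal.span_le]
    rintro _ ⟨i, j, hij, rfl⟩
    have hij0 : b i = 0 ∨ b j = 0 := by
      by_contra hb2
      push_neg at hb2
      refine hcon (Finsupp.single i 1 + Finsupp.single j 1) ⟨i, j, hij, rfl⟩ ?_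
      intro v
      rw [Finsupp.add_apply, Finsupp.single_apply, Finsupp.single_apply]
      have hijne : i ≠ j := hij.ne
      split_ifs with h1 h2 h2
      · exact absurd (h1.trans h2.symm) hijne
      · subst h1; omega
      · subst h2; omega
      · omega
    rcases hij0 with h | h
    · exact Ideal.mul_mem_right _ _ (Ideal.subset_span ⟨i, h, rfl⟩)
    · exact Ideal.mul_mem_left _ _ (Ideal.subset_span ⟨j, h, rfl⟩)
  have hXC : h ∈ Ideal.span (X '' Cb : Set (MvPolynomial (Fin n) k)) :=
    (isPrime_span_X_image Cb).mem_of_pow_mem t (hIC ht)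
  rw [mem_ideal_span_X_image] at hXC
  obtain ⟨v, hvC, hvb⟩ := hXC b hb
  exact hvb hvC

end Aux12

/-- `√(I^(3) : x₁²x₂) = (I : x₁) ∩ (I : x₂)`. -/
theorem stmt12 {k : Type*} [Field k] {n : ℕ} (G : SimpleGraph (Fin n))
    (v₁ v₂ : Fin n) (hv : v₁ ≠ v₂) :
    (Submodule.colon (symbPow (edgeIdeal k G) 3)
        (Ideal.span {(X v₁ ^ 2 * X v₂ : MvPolynomial (Fin n) k)})).radical
      = Submodule.colon (edgeIdeal k G) (Ideal.span {(X v₁ : MvPolynomial (Fin n) k)})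
        ⊓ Submodule.colon (edgeIdeal k G) (Ideal.span {(X v₂ : MvPolynomial (Fin n) k)}) := by
  apply le_antisymm
  · intro g hg
    obtain ⟨t, ht⟩ := Ideal.mem_radical_iff.mp hg
    rw [Ideal.mem_colon_span_singleton] at ht
    have key1 : ∀ p ∈ (edgeIdeal k G).minimalPrimes,
        g ^ t * (X v₁ ^ 2 * X v₂) ∈ p ^ 3 := by
      intro p hp
      rw [symbPow] at ht
      simp only [Submodule.mem_iInf] at ht
      exact ht p hp
    rw [Submodule.mem_inf]
    constructor
    · rw [Ideal.mem_colon_span_singleton]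
      apply radical_le_edgeIdeal
      rw [Ideal.radical_eq_sInf]
      rw [Submodule.mem_sInf]
      intro J hJ
      haveI := hJ.2
      obtain ⟨p, hpmin, hpJ⟩ := Ideal.exists_minimalPrimes_le hJ.1
      apply hpJ
      have hpstruct := minimalPrime_eq_span G hpmin
      by_cases hv1 : X v₁ ∈ p
      · exact Ideal.mul_mem_left _ _ hv1
      · have hgp : g ∈ p := by
          have hgt : g ^ t ∈ Ideal.span (X '' {v | X v ∈ p}) :=
            key_colon {v | X v ∈ p} (Or.inl hv1) (g ^ t)
              (hpstruct ▸ key1 p hpmin)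
          rw [← hpstruct] at hgt
          exact hpmin.1.1.mem_of_pow_mem t hgt
        exact Ideal.mul_mem_right _ _ hgp
    · rw [Ideal.mem_colon_span_singleton]
      apply radical_le_edgeIdeal
      rw [Ideal.radical_eq_sInf]
      rw [Submodule.mem_sInf]
      intro J hJ
      haveI := hJ.2
      obtain ⟨p, hpmin, hpJ⟩ := Ideal.exists_minimalPrimes_le hJ.1
      apply hpJ
      have hpstruct := minimalPrime_eq_span G hpmin
      by_cases hv2 : X v₂ ∈ p
      · exact Ideal.mul_mem_left _ _ hv2
      · have hgp : g ∈ p := by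
          have hgt : g ^ t ∈ Ideal.span (X '' {v | X v ∈ p}) :=
            key_colon {v | X v ∈ p} (Or.inr hv2) (g ^ t)
              (hpstruct ▸ key1 p hpmin)
          rw [← hpstruct] at hgt
          exact hpmin.1.1.mem_of_pow_mem t hgt
        exact Ideal.mul_mem_right _ _ hgp
  · intro g hg
    rw [Submodule.mem_inf] at hg
    obtain ⟨hg1, hg2⟩ := hg
    rw [Ideal.mem_colon_span_singleton] at hg1 hg2
    rw [Ideal.mem_radical_iff]
    refine ⟨3, ?_⟩
    rw [Ideal.mem_colon_span_singleton, symbPow]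
    simp only [Submodule.mem_iInf]
    intro p hp
    have h1 : g * X v₁ ∈ p := hp.1.2 hg1
    have h2 : g * X v₂ ∈ p := hp.1.2 hg2
    have h3 : g ^ 3 * (X v₁ ^ 2 * X v₂) = g * X v₁ * (g * X v₁) * (g * X v₂) := by ring
    rw [h3]
    show _ ∈ p ^ 3
    rw [pow_succ, pow_two]
    exact Ideal.mul_mem_mul (Ideal.mul_mem_mul h1 h1) h2
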